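/- Let Q ∈ (0,1/2) and s > 3/2. Define for a sequence (y_n)_{n≥4} with Σ n^{2(s-1)} y_n^2 < ∞ the sequence B_{n+1} = Σ_{m=0}^{n-3} Q^m f_{n+1-m} (with B_3 = 0), where f_k = π y_k /((1-Q^2)(k-1)/2 - 1 - Q^{k-1}). Then there is a constant C = C(Q,s) such that Σ n^{2s} B_n^2 ≤ C Σ n^{2(s-1)} y_n^2; i.e., the inverse of the linearized operator is bounded from H^{s-1} to H^s. -/
import Mathlib
open Finset Real

lemma denom_bound (Q : ℝ) (hQ0 : 0 < Q) (hQh : Q < 1/2) :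
    ∃ α > 0, ∀ k : ℕ, 4 ≤ k → α * k ≤ (1 - Q^2)*((k:ℝ) - 1)/2 - 1 - Q^(k-1) := by
  set D4 : ℝ := (1 - Q^2)*3/2 - 1 - Q^3 with hD4def
  have hD4 : 0 < D4 := by
    have h1 : (0:ℝ) < 1 - 2*Q := by linarith
    have h2 : (0:ℝ) < (1+Q)^2 := by positivity
    have h3 : (0:ℝ) < (1 - Q^2)*3/2 - 1 - Q^3 := by nlinarith [mul_pos h1 h2]
    rw [hD4def]; exact h3
  set β : ℝ := (1 - Q^2)/2 with hβdef
  have hβ : 0 < β := by nlinarith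
  refine ⟨min (D4/8) (β/2), by positivity, ?_⟩
  intro k hk
  have hkr : (4:ℝ) ≤ (k:ℝ) := by exact_mod_cast hk
  have hQpow : Q^(k-1) ≤ Q^3 := by
    apply pow_le_pow_of_le_one (le_of_lt hQ0) (by linarith) (by omega)
  have hstep : D4 + β * ((k:ℝ) - 4) ≤ (1 - Q^2)*((k:ℝ) - 1)/2 - 1 - Q^(k-1) := by
    have : D4 + β * ((k:ℝ) - 4) = (1 - Q^2)*((k:ℝ) - 1)/2 - 1 - Q^3 := by
      rw [hD4def, hβdef]; ring
    linarith
  refine le_trans ?_ hstep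
  have hm1 : min (D4/8) (β/2) ≤ D4/8 := min_le_left _ _
  have hm2 : min (D4/8) (β/2) ≤ β/2 := min_le_right _ _
  have hm0 : 0 < min (D4/8) (β/2) := by positivity
  rcases le_total (k:ℝ) 8 with h8 | h8
  · nlinarith
  · nlinarith

lemma a_summable (Q s : ℝ) (hQ0 : 0 < Q) (hQ1 : Q < 1) (hs : 0 ≤ s) :
    Summable (fun m : ℕ => Q^m * ((m:ℝ)+1)^s) := by
  have h0 : Summable (fun n : ℕ => (n:ℝ)^(⌈s⌉₊) * Q^n) :=
    summable_pow_mul_geometric_of_norm_lt_one _ (by rw [Real.norm_eq_abs, abs_of_pos hQ0]; exact hQ1)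
  have h1 : Summable (fun m : ℕ => ((m:ℝ)+1)^(⌈s⌉₊) * Q^(m+1)) := by
    have := (summable_nat_add_iff 1).mpr h0
    refine this.congr fun m => ?_
    push_cast
    ring
  have h2 : Summable (fun m : ℕ => Q⁻¹ * (((m:ℝ)+1)^(⌈s⌉₊) * Q^(m+1))) := h1.mul_left _
  refine Summable.of_nonneg_of_le (fun m => ?_) (fun m => ?_) h2
  · have : (0:ℝ) ≤ Q^m * ((m:ℝ)+1)^s := by positivity
    exact this
  have hb : (1:ℝ) ≤ (m:ℝ)+1 := by have := Nat.cast_nonneg (α:=ℝ) m; linarith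
  have : ((m:ℝ)+1)^s ≤ ((m:ℝ)+1)^(⌈s⌉₊:ℝ) :=
    Real.rpow_le_rpow_of_exponent_le hb (Nat.le_ceil s)
  rw [Real.rpow_natCast] at this
  have hQm : Q⁻¹ * (((m:ℝ)+1)^(⌈s⌉₊) * Q^(m+1)) = Q^m * ((m:ℝ)+1)^(⌈s⌉₊) := by
    field_simp
    ring
  rw [hQm]
  have hQmn : (0:ℝ) ≤ Q^m := by positivity
  exact mul_le_mul_of_nonneg_left this hQmn

theorem stmt_10 (Q s : ℝ) (hQ : Q ∈ Set.Ioo (0:ℝ) (1/2)) (hs : 3/2 < s) :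
    ∃ C > 0, ∀ y f B : ℕ → ℝ,
      (∀ k : ℕ, 4 ≤ k → f k = π * y k / ((1 - Q^2)*((k:ℝ) - 1)/2 - 1 - Q^(k-1))) →
      (∀ n : ℕ, n ≤ 3 → B n = 0) →
      (∀ n : ℕ, 3 ≤ n → B (n+1) = ∑ m ∈ range (n-2), Q^m * f (n+1-m)) →
      Summable (fun n : ℕ => (n:ℝ)^(2*(s-1)) * (y n)^2) →
      ∑' n : ℕ, (n:ℝ)^(2*s) * (B n)^2 ≤ C * ∑' n : ℕ, (n:ℝ)^(2*(s-1)) * (y n)^2 := by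
  obtain ⟨hQ0, hQh⟩ := hQ
  have hQ1 : Q < 1 := by linarith
  have hs0 : (0:ℝ) ≤ s := by linarith
  obtain ⟨α, hα0, hαD⟩ := denom_bound Q hQ0 hQh
  set a : ℕ → ℝ := fun m => Q^m * ((m:ℝ)+1)^s with ha_def
  have ha : Summable a := a_summable Q s hQ0 hQ1 hs0
  have ha0 : ∀ m, 0 ≤ a m := fun m =>
    mul_nonneg (pow_nonneg hQ0.le m) (Real.rpow_nonneg (by positivity) s)
  set A : ℝ := ∑' m, a m with hA_def
  have hA1 : (1:ℝ) ≤ A := by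
    have h0 : a 0 = 1 := by simp [ha_def]
    calc (1:ℝ) = a 0 := h0.symm
    _ ≤ A := Summable.le_tsum ha 0 (fun m _ => ha0 m)
  have hA0 : (0:ℝ) < A := lt_of_lt_of_le one_pos hA1
  have hC0 : (0:ℝ) < (π/α)^2 * A^2 :=
    mul_pos (pow_pos (div_pos Real.pi_pos hα0) 2) (pow_pos hA0 2)
  refine ⟨(π/α)^2 * A^2, hC0, ?_⟩
  intro y f B hf hB0 hBrec hy
  set w : ℕ → ℝ := fun k => (k:ℝ)^(2*(s-1)) * (y k)^2 with hw_def
  have hw0 : ∀ k, 0 ≤ w k := fun k =>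
    mul_nonneg (Real.rpow_nonneg (Nat.cast_nonneg k) _) (sq_nonneg _)
  set W : ℝ := ∑' k, w k with hW_def
  have hW0 : 0 ≤ W := tsum_nonneg hw0
  -- pointwise key estimate
  have key : ∀ n : ℕ, 4 ≤ n →
      (n:ℝ)^(2*s) * (B n)^2 ≤ (π/α)^2 * A * ∑ m ∈ range (n-3), a m * w (n-m) := by
    intro n hn
    have hnpos : (0:ℝ) < (n:ℝ) := by exact_mod_cast (by omega : 0 < n)
    have hrec := hBrec (n-1) (by omega)
    have e1 : n - 1 + 1 = n := by omega
    have e2 : n - 1 - 2 = n - 3 := by omega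
    simp only [e1, e2] at hrec
    -- hrec : B n = ∑ m ∈ range (n-3), Q^m * f (n-m)
    have hBn : (n:ℝ)^s * |B n| ≤
        (π/α) * ∑ m ∈ range (n-3), a m * (((n-m:ℕ):ℝ)^(s-1) * |y (n-m)|) := by
      rw [hrec]
      calc (n:ℝ)^s * |∑ m ∈ range (n-3), Q^m * f (n-m)|
          ≤ (n:ℝ)^s * ∑ m ∈ range (n-3), |Q^m * f (n-m)| :=
            mul_le_mul_of_nonneg_left (Finset.abs_sum_le_sum_abs _ _)
              (Real.rpow_nonneg hnpos.le s)
        _ = ∑ m ∈ range (n-3), (n:ℝ)^s * |Q^m * f (n-m)| := Finset.mul_sum _ _ _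
        _ ≤ ∑ m ∈ range (n-3), (π/α) * (a m * (((n-m:ℕ):ℝ)^(s-1) * |y (n-m)|)) := by
            apply Finset.sum_le_sum
            intro m hm
            rw [Finset.mem_range] at hm
            have hk4 : 4 ≤ n - m := by omega
            have hkr : (4:ℝ) ≤ ((n-m:ℕ):ℝ) := by exact_mod_cast hk4
            have hkpos : (0:ℝ) < ((n-m:ℕ):ℝ) := by linarith
            have hD := hαD (n-m) hk4
            have hDpos : (0:ℝ) < (1 - Q^2)*(((n-m:ℕ):ℝ) - 1)/2 - 1 - Q^((n-m)-1) :=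
              lt_of_lt_of_le (by positivity) hD
            have hfk : |f (n-m)| ≤ π * |y (n-m)| / (α * ((n-m:ℕ):ℝ)) := by
              rw [hf (n-m) hk4, abs_div, abs_mul, abs_of_pos Real.pi_pos,
                abs_of_pos hDpos]
              exact div_le_div_of_nonneg_left (by positivity) (by positivity) hD
            have hnat : n ≤ (m+1) * (n-m) := by
              have h1 : m ≤ m * (n-m) := Nat.le_mul_of_pos_right m (by omega)
              have h2 : (m+1)*(n-m) = m*(n-m) + (n-m) := by ring
              omega
            have hns : (n:ℝ)^s ≤ ((m:ℝ)+1)^s * ((n-m:ℕ):ℝ)^s := by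
              rw [← Real.mul_rpow (by positivity) hkpos.le]
              apply Real.rpow_le_rpow (Nat.cast_nonneg n) _ hs0
              have : ((n:ℕ):ℝ) ≤ (((m+1) * (n-m) : ℕ) : ℝ) := by exact_mod_cast hnat
              push_cast at this
              linarith
            have habs : |Q^m * f (n-m)| = Q^m * |f (n-m)| := by
              rw [abs_mul, abs_of_nonneg (pow_nonneg hQ0.le m)]
            rw [habs]
            have hmain : (n:ℝ)^s * (Q^m * |f (n-m)|) ≤
                (((m:ℝ)+1)^s * ((n-m:ℕ):ℝ)^s) * (Q^m * (π * |y (n-m)| / (α * ((n-m:ℕ):ℝ)))) := by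
              apply mul_le_mul hns
              · exact mul_le_mul_of_nonneg_left hfk (pow_nonneg hQ0.le m)
              · positivity
              · positivity
            refine hmain.trans (le_of_eq ?_)
            have hes : ((n-m:ℕ):ℝ)^(s-1) = ((n-m:ℕ):ℝ)^s / ((n-m:ℕ):ℝ) := by
              rw [Real.rpow_sub hkpos, Real.rpow_one]
            rw [ha_def, hes]
            field_simp
        _ = (π/α) * ∑ m ∈ range (n-3), a m * (((n-m:ℕ):ℝ)^(s-1) * |y (n-m)|) :=
            (Finset.mul_sum _ _ _).symm
    -- Cauchy-Schwarz
    have hCS : (∑ m ∈ range (n-3), a m * (((n-m:ℕ):ℝ)^(s-1) * |y (n-m)|))^2 ≤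
        A * ∑ m ∈ range (n-3), a m * w (n-m) := by
      have hcs := Finset.sum_mul_sq_le_sq_mul_sq (range (n-3))
        (fun m => Real.sqrt (a m))
        (fun m => Real.sqrt (a m) * (((n-m:ℕ):ℝ)^(s-1) * |y (n-m)|))
      have e3 : ∀ m ∈ range (n-3),
          Real.sqrt (a m) * (Real.sqrt (a m) * (((n-m:ℕ):ℝ)^(s-1) * |y (n-m)|))
            = a m * (((n-m:ℕ):ℝ)^(s-1) * |y (n-m)|) := by
        intro m _
        rw [← mul_assoc, Real.mul_self_sqrt (ha0 m)]
      have e4 : ∀ m ∈ range (n-3), Real.sqrt (a m) ^ 2 = a m := fun m _ =>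
        Real.sq_sqrt (ha0 m)
      have e5 : ∀ m ∈ range (n-3),
          (Real.sqrt (a m) * (((n-m:ℕ):ℝ)^(s-1) * |y (n-m)|))^2 = a m * w (n-m) := by
        intro m hm
        rw [Finset.mem_range] at hm
        have hkpos : (0:ℝ) < ((n-m:ℕ):ℝ) := by
          have : 4 ≤ n - m := by omega
          exact_mod_cast Nat.lt_of_lt_of_le (by norm_num) this
        rw [mul_pow, Real.sq_sqrt (ha0 m), mul_pow, sq_abs, hw_def]
        congr 1
        rw [← Real.rpow_natCast (((n-m:ℕ):ℝ)^(s-1)) 2, ← Real.rpow_mul hkpos.le]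
        congr 1
        push_cast
        ring
      rw [Finset.sum_congr rfl e3, Finset.sum_congr rfl e4, Finset.sum_congr rfl e5] at hcs
      refine hcs.trans ?_
      apply mul_le_mul_of_nonneg_right
      · exact Summable.sum_le_tsum (range (n-3)) (fun i _ => ha0 i) ha
      · apply Finset.sum_nonneg
        intro m _
        exact mul_nonneg (ha0 m) (hw0 _)
    have hsq : (n:ℝ)^(2*s) * (B n)^2 = ((n:ℝ)^s * |B n|)^2 := by
      rw [mul_pow, sq_abs]
      congr 1
      rw [sq, ← Real.rpow_add hnpos]
      ring_nf
    rw [hsq]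
    calc ((n:ℝ)^s * |B n|)^2
        ≤ ((π/α) * ∑ m ∈ range (n-3), a m * (((n-m:ℕ):ℝ)^(s-1) * |y (n-m)|))^2 := by
          apply pow_le_pow_left₀ (mul_nonneg (Real.rpow_nonneg hnpos.le s) (abs_nonneg _)) hBn
      _ = (π/α)^2 * (∑ m ∈ range (n-3), a m * (((n-m:ℕ):ℝ)^(s-1) * |y (n-m)|))^2 := by
          rw [mul_pow]
      _ ≤ (π/α)^2 * (A * ∑ m ∈ range (n-3), a m * w (n-m)) := by
          apply mul_le_mul_of_nonneg_left hCS (by positivity)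
      _ = (π/α)^2 * A * ∑ m ∈ range (n-3), a m * w (n-m) := by ring
  -- main finite-sum bound
  have main : ∀ F : Finset ℕ,
      ∑ n ∈ F, (n:ℝ)^(2*s) * (B n)^2 ≤ (π/α)^2 * A^2 * W := by
    intro F
    obtain ⟨N, hFN⟩ := F.exists_nat_subset_range
    have hzero : ∑ n ∈ F, (n:ℝ)^(2*s)*(B n)^2
        = ∑ n ∈ F.filter (fun n => 4 ≤ n), (n:ℝ)^(2*s)*(B n)^2 := by
      symm
      apply Finset.sum_filter_of_ne
      intro n _ hne
      by_contra h4
      push_neg at h4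
      exact hne (by rw [hB0 n (by omega)]; ring)
    rw [hzero]
    have step1 : ∑ n ∈ F.filter (fun n => 4 ≤ n), (n:ℝ)^(2*s)*(B n)^2
        ≤ (π/α)^2 * A * ∑ n ∈ F.filter (fun n => 4 ≤ n), ∑ m ∈ range (n-3), a m * w (n-m) := by
      rw [Finset.mul_sum]
      apply Finset.sum_le_sum
      intro n hn
      exact key n (Finset.mem_filter.mp hn).2
    have step2 : ∑ n ∈ F.filter (fun n => 4 ≤ n), ∑ m ∈ range (n-3), a m * w (n-m)
        ≤ (∑ m ∈ range N, a m) * (∑ k ∈ range N, w k) := by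
      rw [Finset.sum_sigma' (F.filter (fun n => 4 ≤ n)) (fun n => range (n-3))
        (fun n m => a m * w (n-m))]
      rw [Finset.sum_mul_sum, ← Finset.sum_product']
      have hinj : ∀ x ∈ (F.filter (fun n => 4 ≤ n)).sigma (fun n => range (n-3)),
          ∀ z ∈ (F.filter (fun n => 4 ≤ n)).sigma (fun n => range (n-3)),
          (fun x : Σ _ : ℕ, ℕ => (x.2, x.1 - x.2)) x
            = (fun x : Σ _ : ℕ, ℕ => (x.2, x.1 - x.2)) z → x = z := by
        rintro ⟨n1, m1⟩ hx ⟨n2, m2⟩ hz h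
        simp only [Finset.mem_sigma, Finset.mem_filter, Finset.mem_range] at hx hz
        simp only [Prod.mk.injEq] at h
        obtain ⟨h1, h2⟩ := h
        have hx2 : m1 < n1 - 3 := hx.2
        have hz2 : m2 < n2 - 3 := hz.2
        have : n1 = n2 := by omega
        subst this
        simp only [Sigma.mk.inj_iff, heq_eq_eq]
        exact ⟨trivial, h1⟩
      have himg := Finset.sum_image (f := fun p : ℕ × ℕ => a p.1 * w p.2)
        (g := fun x : Σ _ : ℕ, ℕ => (x.2, x.1 - x.2)) hinj
      have heq : ∑ x ∈ (F.filter (fun n => 4 ≤ n)).sigma (fun n => range (n-3)),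
          a x.2 * w (x.1 - x.2)
          = ∑ p ∈ ((F.filter (fun n => 4 ≤ n)).sigma (fun n => range (n-3))).image
              (fun x : Σ _ : ℕ, ℕ => (x.2, x.1 - x.2)), a p.1 * w p.2 := himg.symm
      rw [heq]
      apply Finset.sum_le_sum_of_subset_of_nonneg
      · intro p hp
        simp only [Finset.mem_image, Finset.mem_sigma, Finset.mem_filter,
          Finset.mem_range] at hp
        obtain ⟨⟨n1, m1⟩, ⟨⟨hnF, _⟩, hm1⟩, hpe⟩ := hp
        have hn1N : n1 < N := Finset.mem_range.mp (hFN hnF)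
        subst hpe
        rw [Finset.mem_product, Finset.mem_range, Finset.mem_range]
        show m1 < N ∧ n1 - m1 < N
        have hm1' : m1 < n1 - 3 := hm1
        constructor <;> omega
      · intro p _ _
        exact mul_nonneg (ha0 p.1) (hw0 p.2)
    have step3a : ∑ m ∈ range N, a m ≤ A :=
      Summable.sum_le_tsum (range N) (fun i _ => ha0 i) ha
    have step3b : ∑ k ∈ range N, w k ≤ W :=
      Summable.sum_le_tsum (range N) (fun i _ => hw0 i) hy
    have hsum_nonneg : (0:ℝ) ≤ ∑ k ∈ range N, w k :=
      Finset.sum_nonneg (fun i _ => hw0 i)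
    have hsa_nonneg : (0:ℝ) ≤ ∑ m ∈ range N, a m :=
      Finset.sum_nonneg (fun i _ => ha0 i)
    calc ∑ n ∈ F.filter (fun n => 4 ≤ n), (n:ℝ)^(2*s)*(B n)^2
        ≤ (π/α)^2 * A * ∑ n ∈ F.filter (fun n => 4 ≤ n), ∑ m ∈ range (n-3), a m * w (n-m) :=
          step1
      _ ≤ (π/α)^2 * A * ((∑ m ∈ range N, a m) * (∑ k ∈ range N, w k)) := by
          apply mul_le_mul_of_nonneg_left step2 (by positivity)
      _ ≤ (π/α)^2 * A * (A * W) := by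
          apply mul_le_mul_of_nonneg_left _ (by positivity)
          exact mul_le_mul step3a step3b hsum_nonneg hA0.le
      _ = (π/α)^2 * A^2 * W := by ring
  by_cases hS : Summable (fun n : ℕ => (n:ℝ)^(2*s) * (B n)^2)
  · exact Summable.tsum_le_of_sum_le hS main
  · rw [tsum_eq_zero_of_not_summable hS]
    exact mul_nonneg (mul_nonneg (sq_nonneg _) (sq_nonneg _)) hW0
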